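/- arXiv:2412.00590 — 5 statements merged into one kernel-verified Lean document; each statement's English description precedes it below -/
import Mathlib

section
/- If S is an additively reduced semidomain and G a torsion-free abelian group, then the units of the group semidomain S[G] are exactly the monomials s·x^g with s a unit of S and g ∈ G. -/
/-!
A torsion-free abelian group has unique sums, because each of its finitely generated subgroups is
free abelian; being a group, it then even has two unique sums. Let `f * h = 1` in `S[G]`. Since `S`
has no zero divisors, every unique-sum pair `(a, b)` of the supports contributes the nonzero
coefficient `f a * h b` to `f * h = 1`, so `a + b = 0`. Two distinct unique-sum pairs would then
have the same sum, which a unique-sum pair forbids; hence `f` and `h` are monomials, and their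
coefficients are mutually inverse.
-/
/-- Witness that `S` is a semidomain: an injective semiring hom into an integral domain. -/
structure SemidomainWitness (S : Type*) [CommSemiring S] where
  D : Type
  [commRing : CommRing D]
  [isDomain : IsDomain D]
  emb : S →+* D
  inj : Function.Injective emb

/-- `S` is a semidomain, i.e. (isomorphic to) a subsemiring of an integral domain. -/
def IsSemidomain (S : Type*) [CommSemiring S] : Prop := Nonempty (SemidomainWitness S)

/-- `S` is additively reduced: `0` is the only additively invertible element. -/
def AddReduced (S : Type*) [AddZeroClass S] : Prop := ∀ a b : S, a + b = 0 → a = 0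

/-- `s` is an atom of the additive monoid `(S, +)` (for `S` additively reduced):
it is nonzero and cannot be written as a sum of two nonzero elements. -/
def IsAddAtom {S : Type*} [AddZeroClass S] (s : S) : Prop :=
  s ≠ 0 ∧ ∀ a b : S, s = a + b → a = 0 ∨ b = 0

/-- `S` is additively Furstenberg: every nonzero element is divisible in `(S, +)`
by an additive atom. -/
def AddFurstenberg (S : Type*) [AddZeroClass S] : Prop :=
  ∀ s : S, s ≠ 0 → ∃ a t : S, IsAddAtom a ∧ s = a + t

open Finset

theorem isAddTorsionFree_of_nsmul_eq_zero {G : Type*} [AddCommGroup G]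
    (h : ∀ (g : G) (n : ℕ), n ≠ 0 → n • g = 0 → g = 0) : IsAddTorsionFree G where
  nsmul_right_injective n hn a b hab :=
    sub_eq_zero.mp (h _ n hn (by rw [nsmul_sub]; exact sub_eq_zero.mpr hab))

theorem UniqueSums.of_isAddTorsionFree (G : Type*) [AddCommGroup G] [IsAddTorsionFree G] :
    UniqueSums G where
  uniqueAdd_of_nonempty {A B} hA hB := by
    classical
    let H := AddSubgroup.closure ((A ∪ B : Finset G) : Set G)
    have : AddGroup.FG H := AddGroup.closure_finset_fg _
    have hAH : ∀ a ∈ A, a ∈ H := fun a ha ↦ AddSubgroup.subset_closure (by simp [ha])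
    have hBH : ∀ b ∈ B, b ∈ H := fun b hb ↦ AddSubgroup.subset_closure (by simp [hb])
    obtain ⟨a, ha, b, hb, hu⟩ := UniqueSums.uniqueAdd_of_nonempty
      (map_nonempty.mp ((subtype_map_of_mem hAH).symm ▸ hA))
      (map_nonempty.mp ((subtype_map_of_mem hBH).symm ▸ hB))
    refine ⟨a, mem_subtype.mp ha, b, mem_subtype.mp hb, ?_⟩
    rw [← subtype_map_of_mem hAH, ← subtype_map_of_mem hBH]
    exact (UniqueAdd.addHom_map_iff (Function.Embedding.subtype _) fun _ _ ↦ rfl).mpr hu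

theorem IsSemidomain.noZeroDivisors {S : Type*} [CommSemiring S] (hS : IsSemidomain S) :
    NoZeroDivisors S := by
  obtain ⟨W⟩ := hS
  let := W.commRing
  have := W.isDomain
  exact W.inj.noZeroDivisors W.emb (map_zero _) (map_mul _)

namespace AddMonoidAlgebra

variable {R G : Type*} [Semiring R]

theorem add_eq_zero_of_mul_eq_one_of_uniqueAdd [NoZeroDivisors R] [AddZeroClass G]
    {f h : R[G]} (hfh : f * h = 1) {a b : G} (ha : a ∈ f.coeff.support)
    (hb : b ∈ h.coeff.support) (hu : UniqueAdd f.coeff.support h.coeff.support a b) :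
    a + b = 0 := by
  by_contra hne
  have hcoeff := coeff_mul_add_of_uniqueAdd hu
  rw [hfh, one_def, coeff_single, Finsupp.single_eq_of_ne hne] at hcoeff
  exact mul_ne_zero (Finsupp.mem_support_iff.mp ha) (Finsupp.mem_support_iff.mp hb) hcoeff.symm

theorem card_support_mul_card_support_le_one_of_mul_eq_one [NoZeroDivisors R] [AddZeroClass G]
    [TwoUniqueSums G] {f h : R[G]} (hfh : f * h = 1) :
    #f.coeff.support * #h.coeff.support ≤ 1 := by
  by_contra! hcard
  obtain ⟨p, hp, q, hq, hne, hup, huq⟩ := TwoUniqueSums.uniqueAdd_of_one_lt_card hcard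
  rw [mem_product] at hp hq
  have hp0 := add_eq_zero_of_mul_eq_one_of_uniqueAdd hfh hp.1 hp.2 hup
  have hq0 := add_eq_zero_of_mul_eq_one_of_uniqueAdd hfh hq.1 hq.2 huq
  exact hne (Prod.ext_iff.mpr (hup hq.1 hq.2 (hq0.trans hp0.symm))).symm

theorem exists_eq_single_of_mul_eq_one [NoZeroDivisors R] [Nontrivial R] [AddZeroClass G]
    [TwoUniqueSums G] {f h : R[G]} (hfh : f * h = 1) :
    ∃ g s g' t, f = single g s ∧ h = single g' t := by
  have hf : 0 < #f.coeff.support := card_pos.mpr (Finsupp.support_nonempty_iff.mpr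
    (coeff_eq_zero.not.mpr (left_ne_zero_of_mul_eq_one hfh)))
  have hh : 0 < #h.coeff.support := card_pos.mpr (Finsupp.support_nonempty_iff.mpr
    (coeff_eq_zero.not.mpr (right_ne_zero_of_mul_eq_one hfh)))
  obtain ⟨hf1, hh1⟩ := mul_eq_one.mp
    ((card_support_mul_card_support_le_one_of_mul_eq_one hfh).antisymm (Nat.mul_pos hf hh))
  obtain ⟨g, s, -, hfs⟩ := Finsupp.card_support_eq_one'.mp hf1
  obtain ⟨g', t, -, hht⟩ := Finsupp.card_support_eq_one'.mp hh1
  exact ⟨g, s, g', t, coeff_injective hfs, coeff_injective hht⟩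

theorem mul_eq_one_of_single_mul_single_eq_one [Nontrivial R] [AddZeroClass G] {g g' : G} {s t : R}
    (h : single g s * single g' t = 1) : s * t = 1 := by
  rw [single_mul_single, one_def, single_inj] at h
  obtain ⟨-, hst⟩ | ⟨-, h10⟩ := h
  exacts [hst, absurd h10 one_ne_zero]

theorem isUnit_single [AddGroup G] {g : G} {s : R} (hs : IsUnit s) : IsUnit (single g s) := by
  obtain ⟨u, rfl⟩ := hs
  exact ⟨⟨single g u, single (-g) ↑u⁻¹, by simp [one_def], by simp [one_def]⟩, rfl⟩

theorem isUnit_iff_exists_single [NoZeroDivisors R] [AddGroup G] [TwoUniqueSums G] {f : R[G]} :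
    IsUnit f ↔ ∃ s g, IsUnit s ∧ f = single g s := by
  refine ⟨fun hf ↦ ?_, fun ⟨s, g, hs, hf⟩ ↦ hf ▸ isUnit_single hs⟩
  rcases subsingleton_or_nontrivial R with _ | _
  · exact ⟨1, 0, isUnit_one, Subsingleton.elim _ _⟩
  obtain ⟨u, rfl⟩ := hf
  obtain ⟨g, s, g', t, hf, hh⟩ := exists_eq_single_of_mul_eq_one u.mul_inv
  have hst := mul_eq_one_of_single_mul_single_eq_one (hf ▸ hh ▸ u.mul_inv)
  have hts := mul_eq_one_of_single_mul_single_eq_one (hf ▸ hh ▸ u.inv_mul)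
  exact ⟨s, g, isUnit_iff_exists.mpr ⟨t, hst, hts⟩, hf⟩

end AddMonoidAlgebra

theorem units_of_group_semidomain_general {S : Type*} [CommSemiring S] {G : Type*} [AddCommGroup G]
    (hS : IsSemidomain S)
    (htf : ∀ (g : G) (n : ℕ), n ≠ 0 → n • g = 0 → g = 0)
    (f : AddMonoidAlgebra S G) :
    IsUnit f ↔ ∃ (s : S) (g : G), IsUnit s ∧ f = AddMonoidAlgebra.single g s := by
  have := hS.noZeroDivisors
  have := isAddTorsionFree_of_nsmul_eq_zero htf
  have := UniqueSums.of_isAddTorsionFree G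
  have := UniqueSums.toTwoUniqueSums_of_addGroup (G := G)
  exact AddMonoidAlgebra.isUnit_iff_exists_single

/-- The units of the group semidomain `S[G]`, for `S` an additively reduced semidomain and
`G` a torsion-free abelian group, are exactly the monomials `s·x^g` with `s` a unit of `S`. -/
theorem units_of_group_semidomain {S : Type*} [CommSemiring S] {G : Type*} [AddCommGroup G]
    (hS : IsSemidomain S) (hred : AddReduced S)
    (htf : ∀ (g : G) (n : ℕ), n ≠ 0 → n • g = 0 → g = 0)
    (f : AddMonoidAlgebra S G) :
    IsUnit f ↔ ∃ (s : S) (g : G), IsUnit s ∧ f = AddMonoidAlgebra.single g s :=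
  units_of_group_semidomain_general hS htf f
end

section
/- Let S be an additively reduced semidomain and G a torsion-free abelian group. An element f = ∑_{i=0}^n s_i x^{g_i} of S[G] with at least two nonzero terms is irreducible (in the multiplicative monoid of nonzero elements of S[G]) if and only if f is monolithic and 1 is a greatest common divisor of the coefficients s_0,…,s_n in S. -/
section GroupAlg
variable {S : Type*} [CommSemiring S] {G : Type*} [AddCommGroup G]

/-- A monomial `s·x^g` in the group semidomain `S[G]`. -/
def IsMonomial (f : AddMonoidAlgebra S G) : Prop :=
  ∃ (g : G) (s : S), f = AddMonoidAlgebra.single g s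

/-- `f` is monolithic: every factorization of `f` in `S[G]` has a monomial factor. -/
def Monolithic (f : AddMonoidAlgebra S G) : Prop :=
  f ≠ 0 ∧ ∀ p q : AddMonoidAlgebra S G, f = p * q → IsMonomial p ∨ IsMonomial q

end GroupAlg

theorem twoUniqueSums_of_isAddTorsionFree (G : Type*) [AddCommGroup G] [IsAddTorsionFree G] :
    TwoUniqueSums G where
  uniqueAdd_of_one_lt_card {A B} hc := by
    classical
    -- `A` and `B` live in a finitely generated torsion-free subgroup, which embeds into some `ℤⁿ`.
    set H := AddSubgroup.closure ((A ∪ B : Finset G) : Set G)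
    have hA : ∀ a ∈ A, a ∈ H := fun a ha ↦ AddSubgroup.subset_closure (by simp [ha])
    have hB : ∀ b ∈ B, b ∈ H := fun b hb ↦ AddSubgroup.subset_closure (by simp [hb])
    set ι := Function.Embedding.subtype (· ∈ H)
    have hι : ∀ x y : H, ι (x + y) = ι x + ι y := fun _ _ ↦ rfl
    rw [← Finset.subtype_map_of_mem hA, ← Finset.subtype_map_of_mem hB] at hc ⊢
    rw [Finset.card_map, Finset.card_map] at hc
    obtain ⟨⟨a₁, b₁⟩, h₁, ⟨a₂, b₂⟩, h₂, hne, hu₁, hu₂⟩ :=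
      AffineAddMonoid.to_twoUniqueSums.uniqueAdd_of_one_lt_card hc
    refine ⟨(ι a₁, ι b₁), ?_, (ι a₂, ι b₂), ?_, ?_,
      (UniqueAdd.addHom_map_iff ι hι).2 hu₁, (UniqueAdd.addHom_map_iff ι hι).2 hu₂⟩
    · rw [Finset.mem_product] at h₁ ⊢
      exact ⟨Finset.mem_map_of_mem ι h₁.1, Finset.mem_map_of_mem ι h₁.2⟩
    · rw [Finset.mem_product] at h₂ ⊢
      exact ⟨Finset.mem_map_of_mem ι h₂.1, Finset.mem_map_of_mem ι h₂.2⟩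
    · simpa [Prod.ext_iff, ι.injective.eq_iff] using hne

theorem IsSemidomain.isDomain {S : Type*} [CommSemiring S] (hS : IsSemidomain S) : IsDomain S := by
  obtain ⟨W⟩ := hS
  let _ := W.commRing
  have _ := W.isDomain
  exact W.inj.isDomain W.emb

namespace AddMonoidAlgebra

theorem coeff_sum_single_of_injective {R M ι : Type*} [Semiring R] [Fintype ι] {g : ι → M}
    (hg : g.Injective) (c : ι → R) (j : ι) : (∑ i, single (g i) (c i)).coeff (g j) = c j := by
  classical
  simp [coeff_sum, Finsupp.single_apply, hg.eq_iff]

theorem one_lt_card_support_mul {R A : Type*} [Semiring R] [NoZeroDivisors R] [Add A]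
    [TwoUniqueSums A] {p q : AddMonoidAlgebra R A}
    (h : 1 < p.coeff.support.card * q.coeff.support.card) : 1 < (p * q).coeff.support.card := by
  obtain ⟨⟨a₁, b₁⟩, h₁, ⟨a₂, b₂⟩, h₂, hne, hu₁, hu₂⟩ := TwoUniqueSums.uniqueAdd_of_one_lt_card h
  rw [Finset.mem_product] at h₁ h₂
  have mem_support : ∀ {a b}, UniqueAdd p.coeff.support q.coeff.support a b →
      a ∈ p.coeff.support → b ∈ q.coeff.support → a + b ∈ (p * q).coeff.support := by
    intro a b hu ha hb
    rw [Finsupp.mem_support_iff, coeff_mul_add_of_uniqueAdd hu]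
    exact mul_ne_zero (Finsupp.mem_support_iff.mp ha) (Finsupp.mem_support_iff.mp hb)
  refine Finset.one_lt_card.mpr ⟨a₁ + b₁, mem_support hu₁ h₁.1 h₁.2,
    a₂ + b₂, mem_support hu₂ h₂.1 h₂.2, fun heq ↦ hne ?_⟩
  obtain ⟨rfl, rfl⟩ := hu₁ h₂.1 h₂.2 heq.symm
  rfl

-- `→` goes through the augmentation `R[G] → R` sending every `x^g` to `1`.
theorem isUnit_single_iff {R G : Type*} [CommSemiring R] [AddCommGroup G] {a : G} {t : R} :
    IsUnit (single a t) ↔ IsUnit t := by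
  constructor
  · intro h
    simpa using h.map (lift R R G 1)
  · rintro ⟨u, rfl⟩
    exact .of_mul_eq_one (single (-a) ↑u⁻¹) (by simp [single_mul_single, one_def])

theorem dvd_coeff_of_eq_single_mul {R G : Type*} [Semiring R] [AddGroup G]
    {f q : AddMonoidAlgebra R G} {a : G} {t : R} (h : f = single a t * q) (x : G) :
    t ∣ f.coeff x := by
  rw [h, coeff_single_mul_apply]
  exact dvd_mul_right _ _

end AddMonoidAlgebra

section Monomial

open AddMonoidAlgebra

variable {S : Type*} [CommSemiring S] {G : Type*} [AddCommGroup G]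

theorem isMonomial_iff_card_support_le_one {f : AddMonoidAlgebra S G} :
    IsMonomial f ↔ f.coeff.support.card ≤ 1 := by
  constructor
  · rintro ⟨g, s, rfl⟩
    exact (Finset.card_le_card Finsupp.support_single_subset).trans (Finset.card_singleton g).le
  · intro h
    obtain ⟨g, hg⟩ := Finsupp.card_support_le_one.mp h
    exact ⟨g, f.coeff g, coeff_injective hg⟩

theorem ne_zero_of_not_isMonomial {f : AddMonoidAlgebra S G} (h : ¬IsMonomial f) : f ≠ 0 := by
  rintro rfl
  exact h ⟨0, 0, (single_zero 0).symm⟩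

theorem IsMonomial.of_mul [NoZeroDivisors S] [TwoUniqueSums G] {p q : AddMonoidAlgebra S G}
    (h : IsMonomial (p * q)) (hp : p ≠ 0) (hq : q ≠ 0) : IsMonomial p ∧ IsMonomial q := by
  simp only [isMonomial_iff_card_support_le_one] at h ⊢
  have card_pos : ∀ {r : AddMonoidAlgebra S G}, r ≠ 0 → 0 < r.coeff.support.card :=
    fun hr ↦ Finset.card_pos.2 (Finsupp.support_nonempty_iff.2 (mt coeff_eq_zero.1 hr))
  by_contra hpq
  refine (one_lt_card_support_mul ?_).not_ge h
  exact Nat.one_lt_mul_iff.2 ⟨card_pos hp, card_pos hq, by omega⟩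

theorem IsMonomial.of_isUnit [NoZeroDivisors S] [Nontrivial S] [TwoUniqueSums G]
    {p : AddMonoidAlgebra S G} (h : IsUnit p) : IsMonomial p := by
  obtain ⟨q, hq⟩ := h.exists_right_inv
  exact (IsMonomial.of_mul ⟨0, 1, hq.trans one_def⟩ (left_ne_zero_of_mul_eq_one hq)
    (right_ne_zero_of_mul_eq_one hq)).1

theorem not_isMonomial_sum_single {ι : Type*} [Fintype ι] [Nontrivial ι] {g : ι → G}
    (hg : g.Injective) {c : ι → S} (hc : ∀ i, c i ≠ 0) :
    ¬IsMonomial (∑ i, single (g i) (c i)) := by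
  obtain ⟨i, j, hij⟩ := exists_pair_ne ι
  rw [isMonomial_iff_card_support_le_one, not_le, Finset.one_lt_card]
  have mem_support (k : ι) : g k ∈ (∑ i, single (g i) (c i)).coeff.support := by
    rw [Finsupp.mem_support_iff, coeff_sum_single_of_injective hg]
    exact hc k
  exact ⟨g i, mem_support i, g j, mem_support j, hg.ne hij⟩

end Monomial

theorem irreducible_iff_monolithic_and_gcd_one_general
    {S : Type*} [CommSemiring S] {G : Type*} [AddCommGroup G]
    (hS : IsSemidomain S)
    (htf : ∀ (g : G) (n : ℕ), n ≠ 0 → n • g = 0 → g = 0)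
    (n : ℕ) (hn : 1 ≤ n) (s : Fin (n + 1) → S) (g : Fin (n + 1) → G)
    (hs : ∀ i, s i ≠ 0) (hg : Function.Injective g)
    (f : AddMonoidAlgebra S G)
    (hf : f = ∑ i, AddMonoidAlgebra.single (g i) (s i)) :
    Irreducible f ↔ Monolithic f ∧ ∀ t : S, (∀ i, t ∣ s i) → IsUnit t := by
  have := hS.isDomain
  have : IsAddTorsionFree G :=
    ⟨fun k hk a b hab ↦ sub_eq_zero.1 (htf _ k hk (by rw [smul_sub, sub_eq_zero]; exact hab))⟩
  have := twoUniqueSums_of_isAddTorsionFree G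
  have : Nontrivial (Fin (n + 1)) := Fin.nontrivial_iff_two_le.2 (by omega)
  have hf_not_monomial : ¬IsMonomial f := hf ▸ not_isMonomial_sum_single hg hs
  have dvd_of_eq_single_mul {a t q} (h : f = .single a t * q) (i) : t ∣ s i := by
    have := AddMonoidAlgebra.dvd_coeff_of_eq_single_mul h (g i)
    rwa [hf, AddMonoidAlgebra.coeff_sum_single_of_injective hg] at this
  constructor
  · intro hirr
    refine ⟨⟨ne_zero_of_not_isMonomial hf_not_monomial, fun p q hpq ↦
      (hirr.isUnit_or_isUnit hpq).imp .of_isUnit .of_isUnit⟩, fun t ht ↦ ?_⟩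
    choose c hc using ht
    have hfact : f = .single 0 t * ∑ i, .single (g i) (c i) := by
      simp [hf, Finset.mul_sum, AddMonoidAlgebra.single_mul_single, hc]
    have hc0 (i) : c i ≠ 0 := fun h ↦ hs i (by rw [hc i, h, mul_zero])
    refine AddMonoidAlgebra.isUnit_single_iff.1 ((hirr.isUnit_or_isUnit hfact).resolve_right ?_)
    exact fun hu ↦ not_isMonomial_sum_single hg hc0 (.of_isUnit hu)
  · rintro ⟨⟨-, hmono⟩, hgcd⟩
    refine ⟨fun hu ↦ hf_not_monomial (.of_isUnit hu), fun p q hpq ↦ ?_⟩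
    rcases hmono p q hpq with ⟨a, t, rfl⟩ | ⟨a, t, rfl⟩
    · exact .inl (AddMonoidAlgebra.isUnit_single_iff.2 (hgcd t (dvd_of_eq_single_mul hpq)))
    · exact .inr (AddMonoidAlgebra.isUnit_single_iff.2
        (hgcd t (dvd_of_eq_single_mul (hpq.trans (mul_comm _ _)))))

/-- An element of `S[G]` with at least two terms is irreducible iff it is monolithic and
`1` is a gcd of its coefficients (i.e. every common divisor of the coefficients is a unit). -/
theorem irreducible_iff_monolithic_and_gcd_one
    {S : Type*} [CommSemiring S] {G : Type*} [AddCommGroup G]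
    (hS : IsSemidomain S) (hred : AddReduced S)
    (htf : ∀ (g : G) (n : ℕ), n ≠ 0 → n • g = 0 → g = 0)
    (n : ℕ) (hn : 1 ≤ n) (s : Fin (n + 1) → S) (g : Fin (n + 1) → G)
    (hs : ∀ i, s i ≠ 0) (hg : Function.Injective g)
    (f : AddMonoidAlgebra S G)
    (hf : f = ∑ i, AddMonoidAlgebra.single (g i) (s i)) :
    Irreducible f ↔ Monolithic f ∧ ∀ t : S, (∀ i, t ∣ s i) → IsUnit t :=
  irreducible_iff_monolithic_and_gcd_one_general hS htf n hn s g hs hg f hf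
end

section
/- Let p and q be prime numbers with q/p > (1+√5)/2, and let S = ℕ₀[q/(p+q), q²/(p²+pq)] be the subsemiring of the nonnegative rationals generated by these two elements. Then the additive atoms of S are exactly the powers (q/(p+q))^n for n ∈ ℕ₀. -/
section AddAtoms

variable {R : Type*} [CommSemiring R]

lemma isAddAtom_iff {S : Subsemiring R} (s : S) :
    IsAddAtom s ↔ (s : R) ≠ 0 ∧ ∀ a ∈ S, ∀ b ∈ S, (s : R) = a + b → a = 0 ∨ b = 0 := by
  simp only [IsAddAtom, ne_eq, Subtype.forall, Subtype.ext_iff, Subsemiring.coe_add,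
    ZeroMemClass.coe_zero]

lemma AddSubmonoid.exists_add_of_mem_closure {A : Type*} [AddMonoid A] {M : Set A} {s : A}
    (hs : s ∈ closure M) (hs0 : s ≠ 0) : ∃ m ∈ M, ∃ t ∈ closure M, s = m + t := by
  induction hs using closure_induction with
  | mem m hm => exact ⟨m, hm, 0, zero_mem _, (add_zero m).symm⟩
  | zero => exact absurd rfl hs0
  | add a b ha hb iha ihb =>
    obtain rfl | ha0 := eq_or_ne a 0
    · simpa only [zero_add] using ihb (by simpa only [zero_add] using hs0)
    · obtain ⟨m, hm, t, ht, rfl⟩ := iha ha0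
      exact ⟨m, hm, t + b, add_mem ht hb, add_assoc m t b⟩

lemma Submonoid.zero_notMem_closure {M₀ : Type*} [MonoidWithZero M₀] [NoZeroDivisors M₀]
    [Nontrivial M₀] {G : Set M₀} (hG : 0 ∉ G) : 0 ∉ closure G := fun h =>
  zero_notMem_nonZeroDivisors <|
    closure_le.2 (fun _ hg => mem_nonZeroDivisors_of_ne_zero (ne_of_mem_of_not_mem hg hG)) h

lemma Subsemiring.mem_submonoidClosure_of_isAddAtom {G : Set R}
    (hG : (0 : R) ∉ Submonoid.closure G) {s : closure G} (hs : IsAddAtom s) :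
    (s : R) ∈ Submonoid.closure G := by
  rw [isAddAtom_iff] at hs
  obtain ⟨m, hm, t, ht, hst⟩ :=
    AddSubmonoid.exists_add_of_mem_closure (mem_closure_iff.1 s.2) hs.1
  rcases hs.2 m (mem_closure_iff.2 (AddSubmonoid.subset_closure hm)) t (mem_closure_iff.2 ht) hst
    with rfl | rfl
  · exact absurd hm hG
  · rwa [hst, add_zero]

lemma not_isAddAtom_of_eq_mul [NoZeroDivisors R] {S : Subsemiring R} {x y r : R}
    (hx : x ∈ S) (hy : y ∈ S) (hr : r ∈ S) (hx0 : x ≠ 0) (hy0 : y ≠ 0) (hr0 : r ≠ 0)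
    (hxy : y = x * y + x ^ 2) {s : S} (hs : (s : R) = r * y) : ¬IsAddAtom s := by
  rw [isAddAtom_iff]
  rintro ⟨-, hsplit⟩
  have hrxy : r * x * y ∈ S := mul_mem (mul_mem hr hx) hy
  have hrxx : r * x ^ 2 ∈ S := mul_mem hr (pow_mem hx 2)
  have hsum : (s : R) = r * x * y + r * x ^ 2 := by rw [hs]; nth_rw 1 [hxy]; ring
  rcases hsplit _ hrxy _ hrxx hsum with h | h <;> simp [hr0, hx0, hy0] at h

end AddAtoms

section PadicNorm

variable (q : ℕ) [Fact q.Prime] {x y : ℚ≥0}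

lemma padicNorm_pow_mul_pow (hx : padicNorm q x = (q : ℚ)⁻¹) (hy : padicNorm q y = (q : ℚ)⁻¹ ^ 2)
    (a b : ℕ) : padicNorm q ((x ^ a * y ^ b : ℚ≥0) : ℚ) = (q : ℚ)⁻¹ ^ (a + 2 * b) := by
  rw [NNRat.coe_mul, NNRat.coe_pow, NNRat.coe_pow, padicNorm.mul,
    IsAbsoluteValue.abv_pow (padicNorm q), IsAbsoluteValue.abv_pow (padicNorm q), hx, hy,
    pow_add, pow_mul]

variable (hx1 : x ≤ 1) (hxy : x ^ 2 ≤ y) (hx : padicNorm q x = (q : ℚ)⁻¹)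
  (hy : padicNorm q y = (q : ℚ)⁻¹ ^ 2)
include hx1 hxy hx hy

lemma padicNorm_le_of_lt_pow {n : ℕ} {s : ℚ≥0} (hs : s ∈ Subsemiring.closure {x, y})
    (hsn : s < x ^ n) : padicNorm q s ≤ (q : ℚ)⁻¹ ^ (n + 1) := by
  have hq_inv : (q : ℚ)⁻¹ ≤ 1 := inv_le_one_of_one_le₀ (mod_cast (Fact.out : q.Prime).one_le)
  induction Subsemiring.mem_closure_iff.1 hs using AddSubmonoid.closure_induction with
  | mem m hm =>
    obtain ⟨a, b, rfl⟩ := (Submonoid.mem_closure_pair x y m).1 hm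
    have hn : n + 1 ≤ a + 2 * b := by
      by_contra! h
      have : x ^ n ≤ x ^ a * y ^ b := calc
        x ^ n ≤ x ^ a * (x ^ 2) ^ b := by
          rw [← pow_mul, ← pow_add]; exact pow_le_pow_of_le_one zero_le hx1 (by omega)
        _ ≤ x ^ a * y ^ b := by gcongr
      exact hsn.not_ge this
    rw [padicNorm_pow_mul_pow q hx hy]
    exact pow_le_pow_of_le_one (by positivity) hq_inv hn
  | zero => simp only [NNRat.coe_zero, padicNorm.zero]; positivity
  | add u v hu hv ihu ihv =>
    have hun : u < x ^ n := (le_add_right le_rfl).trans_lt hsn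
    have hvn : v < x ^ n := (le_add_left le_rfl).trans_lt hsn
    calc padicNorm q ((u + v : ℚ≥0) : ℚ)
        ≤ max (padicNorm q u) (padicNorm q v) := by
          rw [NNRat.coe_add]; exact padicNorm.nonarchimedean
      _ ≤ (q : ℚ)⁻¹ ^ (n + 1) := max_le (ihu (Subsemiring.mem_closure_iff.2 hu) hun)
          (ihv (Subsemiring.mem_closure_iff.2 hv) hvn)

lemma isAddAtom_of_eq_pow (hx0 : x ≠ 0) {n : ℕ} {s : Subsemiring.closure {x, y}}
    (hs : (s : ℚ≥0) = x ^ n) : IsAddAtom s := by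
  rw [isAddAtom_iff, hs]
  refine ⟨pow_ne_zero n hx0, fun u hu v hv huv => ?_⟩
  by_contra! h
  have hun : u < x ^ n := huv ▸ lt_add_of_pos_right u (pos_iff_ne_zero.2 h.2)
  have hvn : v < x ^ n := huv ▸ lt_add_of_pos_left v (pos_iff_ne_zero.2 h.1)
  have hq_inv_pos : 0 < (q : ℚ)⁻¹ := inv_pos.2 (mod_cast (Fact.out : q.Prime).pos)
  have hq_inv : (q : ℚ)⁻¹ < 1 := inv_lt_one_of_one_lt₀ (mod_cast (Fact.out : q.Prime).one_lt)
  have : (q : ℚ)⁻¹ ^ n ≤ (q : ℚ)⁻¹ ^ (n + 1) := calc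
    (q : ℚ)⁻¹ ^ n = padicNorm q ((x ^ n * y ^ 0 : ℚ≥0) : ℚ) := by
      rw [padicNorm_pow_mul_pow q hx hy, mul_zero, add_zero]
    _ ≤ max (padicNorm q u) (padicNorm q v) := by
      rw [pow_zero, mul_one, huv, NNRat.coe_add]; exact padicNorm.nonarchimedean
    _ ≤ (q : ℚ)⁻¹ ^ (n + 1) := max_le (padicNorm_le_of_lt_pow q hx1 hxy hx hy hu hun)
        (padicNorm_le_of_lt_pow q hx1 hxy hx hy hv hvn)
  exact this.not_gt (pow_lt_pow_right_of_lt_one₀ hq_inv_pos hq_inv n.lt_succ_self)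

end PadicNorm

section Generators

variable {p q : ℕ}

lemma sq_div_add_mul_eq {K : Type*} [Semifield K] {a b : K} (ha : a ≠ 0) (hab : a + b ≠ 0) :
    b ^ 2 / (a ^ 2 + a * b) = b / (a + b) * (b ^ 2 / (a ^ 2 + a * b)) + (b / (a + b)) ^ 2 := by
  have : a ^ 2 + a * b ≠ 0 := by rw [sq, ← mul_add]; exact mul_ne_zero ha hab
  field_simp
  ring

lemma div_add_sq_le {K : Type*} [Semifield K] [LinearOrder K] [IsStrictOrderedRing K] {a b : K}
    (ha : 0 < a) (hb : 0 ≤ b) : (b / (a + b)) ^ 2 ≤ b ^ 2 / (a ^ 2 + a * b) := by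
  have : a ^ 2 + a * b ≤ (a + b) ^ 2 := calc
    a ^ 2 + a * b ≤ a ^ 2 + a * b + (a * b + b ^ 2) := le_add_of_nonneg_right (by positivity)
    _ = (a + b) ^ 2 := by ring
  rw [div_pow]
  exact div_le_div_of_nonneg_left (pow_nonneg hb 2) (by positivity) this

lemma pos_and_lt_of_goldenRatio_lt_div (h : Real.goldenRatio < (q : ℝ) / p) : 0 < p ∧ p < q := by
  have hp : 0 < p := Nat.pos_of_ne_zero fun hp => by
    simp only [hp, Nat.cast_zero, div_zero] at h; exact Real.goldenRatio_pos.not_gt h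
  refine ⟨hp, ?_⟩
  have := Real.one_lt_goldenRatio.trans h
  rw [one_lt_div (by positivity)] at this
  exact_mod_cast this

variable [Fact q.Prime]

lemma padicNorm_div_add (hqp : ¬q ∣ p) : padicNorm q ((q : ℚ) / (p + q)) = (q : ℚ)⁻¹ := by
  have hqpq : ¬q ∣ p + q := fun h => hqp ((Nat.dvd_add_left dvd_rfl).1 h)
  rw [padicNorm.div, padicNorm.padicNorm_p_of_prime, ← Nat.cast_add,
    (padicNorm.nat_eq_one_iff _).2 hqpq, div_one]

lemma padicNorm_sq_div_sq_add_mul (hqp : ¬q ∣ p) :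
    padicNorm q ((q : ℚ) ^ 2 / (p ^ 2 + p * q)) = (q : ℚ)⁻¹ ^ 2 := by
  have hqpq : ¬q ∣ p * (p + q) := fun h =>
    ((Fact.out : q.Prime).dvd_mul.1 h).elim hqp fun h => hqp ((Nat.dvd_add_left dvd_rfl).1 h)
  have : (p : ℚ) ^ 2 + p * q = (p * (p + q) : ℕ) := by push_cast; ring
  rw [this, padicNorm.div, IsAbsoluteValue.abv_pow (padicNorm q), padicNorm.padicNorm_p_of_prime,
    (padicNorm.nat_eq_one_iff _).2 hqpq, div_one]

end Generators

theorem addAtoms_of_Spq_general (p q : ℕ) (hq : q.Prime)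
    (hpq : (1 + Real.sqrt 5) / 2 < (q : ℝ) / (p : ℝ))
    (Spq : Subsemiring ℚ≥0)
    (hSpq : Spq = Subsemiring.closure
      {(q : ℚ≥0) / ((p : ℚ≥0) + (q : ℚ≥0)),
       (q : ℚ≥0) ^ 2 / ((p : ℚ≥0) ^ 2 + (p : ℚ≥0) * (q : ℚ≥0))}) :
    ∀ s : Spq, IsAddAtom s ↔ ∃ n : ℕ, (s : ℚ≥0) = ((q : ℚ≥0) / ((p : ℚ≥0) + (q : ℚ≥0))) ^ n := by
  subst hSpq
  have : Fact q.Prime := ⟨hq⟩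
  obtain ⟨hp, hlt⟩ := pos_and_lt_of_goldenRatio_lt_div hpq
  have hqp : ¬q ∣ p := Nat.not_dvd_of_pos_of_lt hp hlt
  set x : ℚ≥0 := (q : ℚ≥0) / ((p : ℚ≥0) + (q : ℚ≥0))
  set y : ℚ≥0 := (q : ℚ≥0) ^ 2 / ((p : ℚ≥0) ^ 2 + (p : ℚ≥0) * (q : ℚ≥0))
  have hp0 : (p : ℚ≥0) ≠ 0 := by exact_mod_cast hp.ne'
  have hpq0 : (p : ℚ≥0) + q ≠ 0 := by simp [hp.ne']
  have hx0 : x ≠ 0 := by simp [x, hq.ne_zero]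
  have hy0 : y ≠ 0 := by simp [y, hp.ne', hq.ne_zero]
  have hxS : x ∈ Subsemiring.closure {x, y} := Subsemiring.subset_closure (by simp)
  have hyS : y ∈ Subsemiring.closure {x, y} := Subsemiring.subset_closure (by simp)
  intro s
  constructor
  · intro hs
    have h0 : (0 : ℚ≥0) ∉ Submonoid.closure {x, y} :=
      Submonoid.zero_notMem_closure (by simp [hx0.symm, hy0.symm])
    obtain ⟨a, b, hab⟩ := (Submonoid.mem_closure_pair x y s).1 <|
      Subsemiring.mem_submonoidClosure_of_isAddAtom h0 hs
    cases b with
    | zero => exact ⟨a, by rw [← hab, pow_zero, mul_one]⟩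
    | succ b =>
      refine absurd hs (not_isAddAtom_of_eq_mul hxS hyS (mul_mem (pow_mem hxS a) (pow_mem hyS b))
        hx0 hy0 (mul_ne_zero (pow_ne_zero a hx0) (pow_ne_zero b hy0))
        (sq_div_add_mul_eq hp0 hpq0) ?_)
      rw [← hab, pow_succ, mul_assoc]
  · rintro ⟨n, hn⟩
    refine isAddAtom_of_eq_pow q (div_le_one_of_le₀ le_add_self zero_le)
      (div_add_sq_le (pos_iff_ne_zero.2 hp0) zero_le) ?_ ?_ hx0 hn
    · push_cast; exact padicNorm_div_add hqp
    · push_cast; exact padicNorm_sq_div_sq_add_mul hqp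

/-- For primes `p, q` with `q/p > (1+√5)/2`, the additive atoms of the semidomain
`S = ℕ₀[q/(p+q), q²/(p²+pq)] ⊆ ℚ≥0` are exactly the powers `(q/(p+q))^n`. -/
theorem addAtoms_of_Spq (p q : ℕ) (hp : p.Prime) (hq : q.Prime)
    (hpq : (1 + Real.sqrt 5) / 2 < (q : ℝ) / (p : ℝ))
    (Spq : Subsemiring ℚ≥0)
    (hSpq : Spq = Subsemiring.closure
      {(q : ℚ≥0) / ((p : ℚ≥0) + (q : ℚ≥0)),
       (q : ℚ≥0) ^ 2 / ((p : ℚ≥0) ^ 2 + (p : ℚ≥0) * (q : ℚ≥0))}) :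
    ∀ s : Spq, IsAddAtom s ↔ ∃ n : ℕ, (s : ℚ≥0) = ((q : ℚ≥0) / ((p : ℚ≥0) + (q : ℚ≥0))) ^ n :=
  addAtoms_of_Spq_general p q hq hpq Spq hSpq
end

section
/- Let p and q be prime numbers with q/p > (1+√5)/2 and S = ℕ₀[q/(p+q), q²/(p²+pq)] ⊆ ℚ≥0. Then S is additively Furstenberg but not additively atomic: every nonzero element of S is divisible in (S,+) by some power (q/(p+q))^t, yet (S,+) is not atomic. -/
open scoped NNRat

namespace SpqAux

/-- monomial α^i β^j -/
def mono (α β : ℚ≥0) (ij : ℕ × ℕ) : ℚ≥0 := α ^ ij.1 * β ^ ij.2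

variable {α β : ℚ≥0}

lemma mono_mul (a b : ℕ × ℕ) :
    mono α β (a.1 + b.1, a.2 + b.2) = mono α β a * mono α β b := by
  simp [mono, pow_add]; ring

lemma mono_mem (ij : ℕ × ℕ) : mono α β ij ∈ Subsemiring.closure {α, β} := by
  have hα : α ∈ Subsemiring.closure {α, β} :=
    Subsemiring.subset_closure (Set.mem_insert _ _)
  have hβ : β ∈ Subsemiring.closure {α, β} :=
    Subsemiring.subset_closure (Set.mem_insert_of_mem _ rfl)
  exact mul_mem (pow_mem hα _) (pow_mem hβ _)

lemma listsum_mem (l : List (ℕ × ℕ)) :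
    (l.map (mono α β)).sum ∈ Subsemiring.closure {α, β} := by
  refine list_sum_mem ?_
  intro x hx
  obtain ⟨ij, _, rfl⟩ := List.mem_map.mp hx
  exact mono_mem ij

lemma smul_listsum (a : ℕ × ℕ) (l : List (ℕ × ℕ)) :
    mono α β a * (l.map (mono α β)).sum
      = ((l.map (fun b => (a.1 + b.1, a.2 + b.2))).map (mono α β)).sum := by
  induction l with
  | nil => simp
  | cons hd tl ih => simp [mul_add, ih, mono_mul]

lemma repr_exists {x : ℚ≥0} (hx : x ∈ Subsemiring.closure {α, β}) :
    ∃ l : List (ℕ × ℕ), x = (l.map (mono α β)).sum := by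
  induction hx using Subsemiring.closure_induction with
  | mem y hy =>
    rcases hy with h | h
    · exact ⟨[(1, 0)], by simp [mono, h]⟩
    · rw [Set.mem_singleton_iff] at h
      exact ⟨[(0, 1)], by simp [mono, h]⟩
  | zero => exact ⟨[], by simp⟩
  | one => exact ⟨[(0, 0)], by simp [mono]⟩
  | add x y hx hy ihx ihy =>
    obtain ⟨l₁, rfl⟩ := ihx; obtain ⟨l₂, rfl⟩ := ihy
    exact ⟨l₁ ++ l₂, by simp⟩
  | mul x y hx hy ihx ihy =>
    obtain ⟨l₁, rfl⟩ := ihx; obtain ⟨l₂, rfl⟩ := ihy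
    clear hx hy
    induction l₁ with
    | nil => exact ⟨[], by simp⟩
    | cons hd tl ih =>
      obtain ⟨lt, hlt⟩ := ih
      refine ⟨l₂.map (fun b => (hd.1 + b.1, hd.2 + b.2)) ++ lt, ?_⟩
      simp only [List.map_cons, List.sum_cons, add_mul, List.map_append, List.sum_append,
        ← hlt, smul_listsum]

lemma pow_beta (hβ : β = α ^ 2 + α * β) (j : ℕ) :
    ∃ r ∈ Subsemiring.closure {α, β}, β ^ j = α ^ (2 * j) + r := by
  induction j with
  | zero => exact ⟨0, zero_mem _, by simp⟩
  | succ n ih =>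
    obtain ⟨r, hr, hrep⟩ := ih
    refine ⟨α ^ (2 * n + 1) * β + β * r, ?_, ?_⟩
    · have hαm : α ∈ Subsemiring.closure {α, β} :=
        Subsemiring.subset_closure (Set.mem_insert _ _)
      have hβm : β ∈ Subsemiring.closure {α, β} :=
        Subsemiring.subset_closure (Set.mem_insert_of_mem _ rfl)
      exact add_mem (mul_mem (pow_mem hαm _) hβm) (mul_mem hβm hr)
    · calc β ^ (n + 1) = β * β ^ n := by ring
        _ = β * (α ^ (2 * n) + r) := by rw [hrep]
        _ = (α ^ 2 + α * β) * α ^ (2 * n) + β * r := by rw [← hβ]; ring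
        _ = α ^ (2 * (n + 1)) + (α ^ (2 * n + 1) * β + β * r) := by ring

lemma mono_ne_zero (hα0 : α ≠ 0) (hβ0 : β ≠ 0) (ij : ℕ × ℕ) : mono α β ij ≠ 0 :=
  mul_ne_zero (pow_ne_zero _ hα0) (pow_ne_zero _ hβ0)

lemma shift_sum (t : ℕ) (l : List (ℕ × ℕ)) (hl : ∀ ij ∈ l, t + 1 ≤ ij.1) :
    α ^ (t + 1) * ((l.map (fun ij => (ij.1 - (t + 1), ij.2))).map (mono α β)).sum
      = (l.map (mono α β)).sum := by
  induction l with
  | nil => simp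
  | cons hd tl ih =>
    have h1 : t + 1 ≤ hd.1 := hl hd (by simp)
    have hkey : α ^ (t + 1) * mono α β (hd.1 - (t + 1), hd.2) = mono α β hd := by
      simp only [mono]
      rw [← mul_assoc, ← pow_add]
      congr 2
      omega
    simp only [List.map_cons, List.sum_cons, mul_add, hkey,
      ih (fun ij h => hl ij (List.mem_cons_of_mem _ h))]

lemma listsum_N {N : ℚ≥0 → Prop} (N0 : N 0) (Nadd : ∀ x y, N x → N y → N (x + y))
    (l : List (ℕ × ℕ)) (h : ∀ ij ∈ l, N (mono α β ij)) : N ((l.map (mono α β)).sum) := by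
  induction l with
  | nil => simpa
  | cons hd tl ih =>
    simp only [List.map_cons, List.sum_cons]
    exact Nadd _ _ (h hd (by simp)) (ih fun ij hij => h ij (List.mem_cons_of_mem _ hij))

lemma no_split (hα0 : 0 < α) (hα1 : α < 1) (hβ1 : 1 ≤ β)
    {N : ℚ≥0 → Prop} (N0 : N 0) (Nadd : ∀ x y, N x → N y → N (x + y))
    (Nmono : ∀ ij, N (mono α β ij))
    (Ninv : ∀ x, N x → x * α = 1 → False)
    (t : ℕ) {a b : ℚ≥0} (ha : a ∈ Subsemiring.closure {α, β})
    (hb : b ∈ Subsemiring.closure {α, β}) (ha0 : a ≠ 0) (hb0 : b ≠ 0)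
    (hab : a + b = α ^ t) : False := by
  obtain ⟨la, rfl⟩ := repr_exists ha
  obtain ⟨lb, rfl⟩ := repr_exists hb
  have hsuma : (la.map (mono α β)).sum < α ^ t := by
    rw [← hab]
    exact lt_add_of_pos_right _ (zero_lt_iff.mpr hb0)
  have hsumb : (lb.map (mono α β)).sum < α ^ t := by
    rw [← hab]
    exact lt_add_of_pos_left _ (zero_lt_iff.mpr ha0)
  have hsum : ((la ++ lb).map (mono α β)).sum = α ^ t := by
    rw [List.map_append, List.sum_append]; exact hab
  have hlt : ∀ ij ∈ la ++ lb, mono α β ij < α ^ t := by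
    intro ij hij
    rcases List.mem_append.mp hij with h | h
    · exact lt_of_le_of_lt
        (List.single_le_sum (fun x _ => zero_le) _ (List.mem_map_of_mem h)) hsuma
    · exact lt_of_le_of_lt
        (List.single_le_sum (fun x _ => zero_le) _ (List.mem_map_of_mem h)) hsumb
  have hge : ∀ ij ∈ la ++ lb, t + 1 ≤ ij.1 := by
    intro ij hij
    have h1 : α ^ ij.1 ≤ mono α β ij := by
      have : (1 : ℚ≥0) ≤ β ^ ij.2 := one_le_pow₀ hβ1
      calc α ^ ij.1 = α ^ ij.1 * 1 := (mul_one _).symm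
        _ ≤ α ^ ij.1 * β ^ ij.2 := by exact mul_le_mul_right this _
        _ = mono α β ij := rfl
    have h2 : α ^ ij.1 < α ^ t := lt_of_le_of_lt h1 (hlt ij hij)
    have := (pow_lt_pow_iff_right_of_lt_one₀ hα0 hα1).mp h2
    omega
  set X := (((la ++ lb).map (fun ij => (ij.1 - (t + 1), ij.2))).map (mono α β)).sum with hXdef
  have hX : α ^ (t + 1) * X = α ^ t := by rw [hXdef, shift_sum t _ hge, hsum]
  have hNX : N X := listsum_N N0 Nadd _ (fun ij _ => Nmono ij)
  have hcan : α ^ t * (X * α) = α ^ t * 1 := by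
    rw [mul_one]
    calc α ^ t * (X * α) = α ^ (t + 1) * X := by ring
      _ = α ^ t := hX
  exact Ninv X hNX (mul_left_cancel₀ (pow_ne_zero t hα0.ne') hcan)

lemma atom_N (hβ : β = α ^ 2 + α * β) (hα0 : α ≠ 0) (hβ0 : β ≠ 0)
    {x : ℚ≥0} (hx : x ∈ Subsemiring.closure {α, β})
    (hat : ∀ u v : ℚ≥0, u ∈ Subsemiring.closure {α, β} → v ∈ Subsemiring.closure {α, β} →
       x = u + v → u = 0 ∨ v = 0)
    {N : ℚ≥0 → Prop} (N0 : N 0) (Nadd : ∀ x y, N x → N y → N (x + y))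
    (Nα : ∀ i : ℕ, N (α ^ i)) : N x := by
  obtain ⟨l, rfl⟩ := repr_exists hx
  have hj : ∀ ij ∈ l, ij.2 = 0 := by
    by_contra h
    push_neg at h
    obtain ⟨⟨i, j⟩, hmem, hjne⟩ := h
    obtain ⟨j', rfl⟩ : ∃ j', j = j' + 1 := ⟨j - 1, by omega⟩
    obtain ⟨s, t, rfl⟩ := List.append_of_mem hmem
    have hsplit : mono α β (i, j' + 1) = mono α β (i + 2, j') + mono α β (i + 1, j' + 1) := by
      simp only [mono]
      calc α ^ i * β ^ (j' + 1) = (α ^ 2 + α * β) * (α ^ i * β ^ j') := by rw [← hβ]; ring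
        _ = _ := by ring
    have hx2 : ((s ++ (i, j' + 1) :: t).map (mono α β)).sum
        = mono α β (i + 2, j') + (mono α β (i + 1, j' + 1) + ((s ++ t).map (mono α β)).sum) := by
      simp only [List.map_append, List.sum_append, List.map_cons, List.sum_cons, hsplit]
      ring
    rcases hat _ _ (mono_mem _) (add_mem (mono_mem _) (listsum_mem _)) hx2 with h0 | h0
    · exact mono_ne_zero hα0 hβ0 _ h0
    · exact mono_ne_zero hα0 hβ0 (i + 1, j' + 1) (add_eq_zero.mp h0).1
  refine listsum_N N0 Nadd l ?_
  intro ij hij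
  have hm : mono α β ij = α ^ ij.1 := by simp [mono, hj ij hij]
  rw [hm]
  exact Nα _

end SpqAux

/-- For primes `p, q` with `q/p > (1+√5)/2`, the semidomain
`S = ℕ₀[q/(p+q), q²/(p²+pq)] ⊆ ℚ≥0` is additively Furstenberg — indeed every nonzero
element is divisible in `(S,+)` by some power `(q/(p+q))^t` — but `S` is not additively
atomic. -/
theorem Spq_addFurstenberg_not_addAtomic (p q : ℕ) (hp : p.Prime) (hq : q.Prime)
    (hpq : (1 + Real.sqrt 5) / 2 < (q : ℝ) / (p : ℝ))
    (Spq : Subsemiring ℚ≥0)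
    (hSpq : Spq = Subsemiring.closure
      {(q : ℚ≥0) / ((p : ℚ≥0) + (q : ℚ≥0)),
       (q : ℚ≥0) ^ 2 / ((p : ℚ≥0) ^ 2 + (p : ℚ≥0) * (q : ℚ≥0))}) :
    (∀ s : Spq, s ≠ 0 → ∃ (t : ℕ) (r : Spq),
        (s : ℚ≥0) = ((q : ℚ≥0) / ((p : ℚ≥0) + (q : ℚ≥0))) ^ t + (r : ℚ≥0)) ∧
    AddFurstenberg Spq ∧
    ¬ (∀ s : Spq, s ≠ 0 →
        ∃ (k : ℕ) (a : Fin k → Spq), (∀ i, IsAddAtom (a i)) ∧ (s : ℚ≥0) = ∑ i, (a i : ℚ≥0)) := by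
  subst hSpq
  set α : ℚ≥0 := (q : ℚ≥0) / ((p : ℚ≥0) + (q : ℚ≥0)) with hαdef
  set β : ℚ≥0 := (q : ℚ≥0) ^ 2 / ((p : ℚ≥0) ^ 2 + (p : ℚ≥0) * (q : ℚ≥0)) with hβdef
  -- ## numeric facts
  have hp0 : 0 < p := hp.pos
  have hq0 : 0 < q := hq.pos
  have hp0R : (0 : ℝ) < p := by exact_mod_cast hp0
  have hq0R : (0 : ℝ) < q := by exact_mod_cast hq0
  have hs5 : Real.sqrt 5 ^ 2 = 5 := Real.sq_sqrt (by norm_num)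
  have hs5nn : (0 : ℝ) ≤ Real.sqrt 5 := Real.sqrt_nonneg 5
  have h1 : (p : ℝ) * (1 + Real.sqrt 5) < 2 * q := by
    have := (div_lt_div_iff₀ (by norm_num) hp0R).mp hpq
    linarith
  have hs5one : (1 : ℝ) ≤ Real.sqrt 5 := by nlinarith [hs5, hs5nn]
  have h2 : (0 : ℝ) < 2 * q - p - p * Real.sqrt 5 := by linarith
  have h3 : (0 : ℝ) < 2 * q - p + p * Real.sqrt 5 := by nlinarith
  have hkeyR : (p : ℝ) * p + p * q < q * q := by nlinarith [mul_pos h2 h3, hs5]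
  have hN : p * p + p * q < q * q := by exact_mod_cast hkeyR
  have hqp : p < q := by nlinarith
  -- ℕ divisibility facts
  have hpq' : p ≠ q := Nat.ne_of_lt hqp
  have hqdp : ¬ q ∣ p := fun h => absurd (Nat.le_of_dvd hp0 h) (by omega)
  have hpdq : ¬ p ∣ q := fun h => hpq' ((Nat.prime_dvd_prime_iff_eq hp hq).mp h)
  have hqpq : ¬ q ∣ (p + q) := by
    intro h
    exact hqdp ((Nat.dvd_add_right (dvd_refl q)).mp (by rwa [Nat.add_comm] at h))
  have hppq : ¬ p ∣ (p + q) := by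
    intro h
    exact hpdq ((Nat.dvd_add_right (dvd_refl p)).mp h)
  have hqd2 : ¬ q ∣ (p * p + p * q) := by
    intro h
    rw [show p * p + p * q = p * (p + q) by ring] at h
    rcases (Nat.Prime.dvd_mul hq).mp h with h | h
    exacts [hqdp h, hqpq h]
  -- ℚ≥0 facts
  have hP0 : (0 : ℚ≥0) < (p : ℚ≥0) := by exact_mod_cast hp0
  have hQ0 : (0 : ℚ≥0) < (q : ℚ≥0) := by exact_mod_cast hq0
  have hPQpos : (0 : ℚ≥0) < (p : ℚ≥0) + (q : ℚ≥0) := add_pos hP0 hQ0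
  have hPQ : (p : ℚ≥0) + (q : ℚ≥0) ≠ 0 := hPQpos.ne'
  have hD2pos : (0 : ℚ≥0) < (p : ℚ≥0) ^ 2 + (p : ℚ≥0) * (q : ℚ≥0) :=
    add_pos (pow_pos hP0 2) (mul_pos hP0 hQ0)
  have hD2 : (p : ℚ≥0) ^ 2 + (p : ℚ≥0) * (q : ℚ≥0) ≠ 0 := hD2pos.ne'
  have hα0 : (0 : ℚ≥0) < α := by rw [hαdef]; exact div_pos hQ0 hPQpos
  have hα1 : α < 1 := by
    rw [hαdef]
    exact (div_lt_one hPQpos).mpr (lt_add_of_pos_left _ hP0)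
  have hltQ : (p : ℚ≥0) ^ 2 + (p : ℚ≥0) * (q : ℚ≥0) < (q : ℚ≥0) ^ 2 := by
    rw [pow_two, pow_two]
    exact_mod_cast hN
  have hβ1 : (1 : ℚ≥0) ≤ β := le_of_lt ((one_lt_div hD2pos).mpr hltQ)
  have hβ0 : β ≠ 0 := by positivity
  have hβeq : β = α ^ 2 + α * β := by
    rw [hαdef, hβdef]
    rw [div_pow, div_mul_div_comm, div_add_div _ _ (pow_ne_zero 2 hPQ) (mul_ne_zero hPQ hD2),
      div_eq_div_iff hD2 (mul_ne_zero (pow_ne_zero 2 hPQ) (mul_ne_zero hPQ hD2))]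
    ring
  have hαd : α * ((p + q : ℕ) : ℚ≥0) = (q : ℚ≥0) := by
    rw [hαdef]; push_cast; exact div_mul_cancel₀ _ hPQ
  have hβd : β * ((p * p + p * q : ℕ) : ℚ≥0) = (q : ℚ≥0) ^ 2 := by
    rw [hβdef]; push_cast
    rw [show ((p:ℚ≥0) * p + p * q) = ((p:ℚ≥0) ^ 2 + p * q) by ring]
    exact div_mul_cancel₀ _ hD2
  -- q-integrality predicate
  set N : ℚ≥0 → Prop := fun x => ∃ n d : ℕ, ¬ (q ∣ d) ∧ x * d = n with hNdef
  have N0 : N 0 := ⟨0, 1, by simp [Nat.Prime.ne_one hq, Nat.dvd_one], by simp⟩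
  have Nadd : ∀ x y, N x → N y → N (x + y) := by
    rintro x y ⟨n, d, hd, hx⟩ ⟨m, e, he, hy⟩
    refine ⟨n * e + m * d, d * e, ?_, ?_⟩
    · intro h
      rcases (Nat.Prime.dvd_mul hq).mp h with h | h
      exacts [hd h, he h]
    · push_cast
      calc (x + y) * ((d : ℚ≥0) * e) = x * d * e + y * e * d := by ring
        _ = (n : ℚ≥0) * e + (m : ℚ≥0) * d := by rw [hx, hy]
  have Nmono : ∀ ij : ℕ × ℕ, N (SpqAux.mono α β ij) := by
    rintro ⟨i, j⟩
    refine ⟨q ^ (i + 2 * j), (p + q) ^ i * (p * p + p * q) ^ j, ?_, ?_⟩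
    · intro h
      rcases (Nat.Prime.dvd_mul hq).mp h with h | h
      · exact hqpq (hq.dvd_of_dvd_pow h)
      · exact hqd2 (hq.dvd_of_dvd_pow h)
    · show α ^ i * β ^ j * _ = _
      push_cast
      calc α ^ i * β ^ j * (((p : ℚ≥0) + q) ^ i * ((p : ℚ≥0) * p + p * q) ^ j)
          = (α ^ i * ((p : ℚ≥0) + q) ^ i) * (β ^ j * ((p : ℚ≥0) * p + p * q) ^ j) := by ring
        _ = (α * ((p : ℚ≥0) + q)) ^ i * (β * ((p : ℚ≥0) * p + p * q)) ^ j := by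
            rw [mul_pow, mul_pow]
        _ = (q : ℚ≥0) ^ i * ((q : ℚ≥0) ^ 2) ^ j := by
            rw [show α * ((p : ℚ≥0) + q) = (q : ℚ≥0) by exact_mod_cast hαd,
              show β * ((p : ℚ≥0) * p + p * q) = (q : ℚ≥0) ^ 2 by exact_mod_cast hβd]
        _ = (q : ℚ≥0) ^ (i + 2 * j) := by rw [← pow_mul, ← pow_add, Nat.mul_comm 2 j]
  have Ninv : ∀ x, N x → x * α = 1 → False := by
    rintro x ⟨n, d, hd, hx⟩ h1
    have hxval : x * (q : ℚ≥0) = (p : ℚ≥0) + q := by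
      have h2 : x * α * ((p : ℚ≥0) + q) = 1 * ((p : ℚ≥0) + q) := by rw [h1]
      rw [hαdef, mul_assoc, div_mul_cancel₀ _ hPQ, one_mul] at h2
      exact h2
    have h2 : ((p : ℚ≥0) + q) * d = (n : ℚ≥0) * q := by
      calc ((p : ℚ≥0) + q) * d = x * q * d := by rw [hxval]
        _ = x * d * q := by ring
        _ = (n : ℚ≥0) * q := by rw [hx]
    have h3 : (p + q) * d = n * q := by exact_mod_cast h2
    have : q ∣ (p + q) * d := ⟨n, by rw [h3, Nat.mul_comm]⟩
    rcases (Nat.Prime.dvd_mul hq).mp this with h | h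
    exacts [hqpq h, hd h]
  -- p-integrality predicate
  set N' : ℚ≥0 → Prop := fun x => ∃ n d : ℕ, ¬ (p ∣ d) ∧ x * d = n with hN'def
  have N'0 : N' 0 := ⟨0, 1, by simp [Nat.Prime.ne_one hp, Nat.dvd_one], by simp⟩
  have N'add : ∀ x y, N' x → N' y → N' (x + y) := by
    rintro x y ⟨n, d, hd, hx⟩ ⟨m, e, he, hy⟩
    refine ⟨n * e + m * d, d * e, ?_, ?_⟩
    · intro h
      rcases (Nat.Prime.dvd_mul hp).mp h with h | h
      exacts [hd h, he h]
    · push_cast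
      calc (x + y) * ((d : ℚ≥0) * e) = x * d * e + y * e * d := by ring
        _ = (n : ℚ≥0) * e + (m : ℚ≥0) * d := by rw [hx, hy]
  have N'α : ∀ i : ℕ, N' (α ^ i) := by
    intro i
    refine ⟨q ^ i, (p + q) ^ i, ?_, ?_⟩
    · intro h
      exact hppq (hp.dvd_of_dvd_pow h)
    · push_cast
      calc α ^ i * ((p : ℚ≥0) + q) ^ i = (α * ((p : ℚ≥0) + q)) ^ i := by rw [mul_pow]
        _ = (q : ℚ≥0) ^ i := by rw [show α * ((p : ℚ≥0) + q) = (q : ℚ≥0) by exact_mod_cast hαd]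
  have hβnotN' : ¬ N' β := by
    rintro ⟨n, d, hd, hx⟩
    have h2 : (q : ℚ≥0) ^ 2 * d = (n : ℚ≥0) * ((p : ℚ≥0) ^ 2 + (p : ℚ≥0) * q) := by
      calc (q : ℚ≥0) ^ 2 * d = β * ((p : ℚ≥0) ^ 2 + (p : ℚ≥0) * q) * d := by
            rw [hβdef, div_mul_cancel₀ _ hD2]
        _ = β * d * ((p : ℚ≥0) ^ 2 + (p : ℚ≥0) * q) := by ring
        _ = (n : ℚ≥0) * ((p : ℚ≥0) ^ 2 + (p : ℚ≥0) * q) := by rw [hx]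
    have h3 : q * q * d = n * (p * p + p * q) := by
      have := h2
      push_cast [pow_two] at this
      exact_mod_cast this
    have hdvd : p ∣ q * q * d := by
      rw [h3, show p * p + p * q = p * (p + q) by ring]
      exact ⟨n * (p + q), by ring⟩
    rcases (Nat.Prime.dvd_mul hp).mp hdvd with h | h
    · rcases (Nat.Prime.dvd_mul hp).mp h with h | h <;> exact hpdq h
    · exact hd h
  -- memberships
  have hαmem : α ∈ Subsemiring.closure {α, β} :=
    Subsemiring.subset_closure (Set.mem_insert _ _)
  have hβmem : β ∈ Subsemiring.closure {α, β} :=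
    Subsemiring.subset_closure (Set.mem_insert_of_mem _ rfl)
  -- ## part 1
  have part1 : ∀ s : (Subsemiring.closure {α, β} : Subsemiring ℚ≥0), s ≠ 0 →
      ∃ (t : ℕ) (r : (Subsemiring.closure {α, β} : Subsemiring ℚ≥0)),
        (s : ℚ≥0) = α ^ t + (r : ℚ≥0) := by
    rintro ⟨x, hx⟩ hs
    have hx0 : x ≠ 0 := fun h => hs (Subtype.ext (by simpa using h))
    obtain ⟨l, hl⟩ := SpqAux.repr_exists hx
    match l, hl with
    | [], hl => exact absurd (by simpa using hl) hx0
    | (i, j) :: tl, hl =>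
      obtain ⟨r, hr, hrep⟩ := SpqAux.pow_beta hβeq j
      refine ⟨i + 2 * j, ⟨α ^ i * r + (tl.map (SpqAux.mono α β)).sum,
        add_mem (mul_mem (pow_mem hαmem i) hr) (SpqAux.listsum_mem tl)⟩, ?_⟩
      show x = α ^ (i + 2 * j) + _
      rw [hl]
      simp only [List.map_cons, List.sum_cons]
      have hm : SpqAux.mono α β (i, j) = α ^ (i + 2 * j) + α ^ i * r := by
        show α ^ i * β ^ j = _
        rw [hrep, mul_add, ← pow_add]
      rw [hm, add_assoc]
  -- ## atoms
  have hatom : ∀ t : ℕ,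
      IsAddAtom (⟨α ^ t, pow_mem hαmem t⟩ : (Subsemiring.closure {α, β} : Subsemiring ℚ≥0)) := by
    intro t
    constructor
    · intro h
      exact pow_ne_zero t hα0.ne' (by simpa using congrArg Subtype.val h)
    · rintro ⟨u, hu⟩ ⟨v, hv⟩ huv
      by_contra hcon
      push_neg at hcon
      obtain ⟨hu0, hv0⟩ := hcon
      have hu0' : u ≠ 0 := fun h => hu0 (Subtype.ext (by simpa using h))
      have hv0' : v ≠ 0 := fun h => hv0 (Subtype.ext (by simpa using h))
      have heq : u + v = α ^ t := (congrArg Subtype.val huv).symm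
      exact SpqAux.no_split hα0 hα1 hβ1 N0 Nadd Nmono Ninv t hu hv hu0' hv0' heq
  -- ## part 2
  have part2 : AddFurstenberg (Subsemiring.closure {α, β} : Subsemiring ℚ≥0) := by
    intro s hs
    obtain ⟨t, r, hrep⟩ := part1 s hs
    exact ⟨⟨α ^ t, pow_mem hαmem t⟩, r, hatom t, Subtype.ext (by simpa using hrep)⟩
  refine ⟨part1, part2, ?_⟩
  -- ## part 3
  intro hcon
  have hβne : (⟨β, hβmem⟩ : (Subsemiring.closure {α, β} : Subsemiring ℚ≥0)) ≠ 0 :=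
    fun h => hβ0 (by simpa using congrArg Subtype.val h)
  obtain ⟨k, a, hat, hsum⟩ := hcon ⟨β, hβmem⟩ hβne
  have hNi : ∀ i : Fin k, N' ((a i : ℚ≥0)) := by
    intro i
    refine SpqAux.atom_N hβeq hα0.ne' hβ0 (a i).2 ?_ N'0 N'add N'α
    intro u v hu hv huv
    rcases (hat i).2 ⟨u, hu⟩ ⟨v, hv⟩ (Subtype.ext huv) with h | h
    · exact Or.inl (by simpa using congrArg Subtype.val h)
    · exact Or.inr (by simpa using congrArg Subtype.val h)
  have hNsum : N' (∑ i, ((a i : ℚ≥0))) :=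
    Finset.sum_induction _ N' N'add N'0 (fun i _ => hNi i)
  rw [← hsum] at hNsum
  exact hβnotN' (by simpa using hNsum)
end

section
/- Let G be a linearly ordered torsion-free abelian group in which every subset bounded below is well-ordered. Then for every strictly increasing sequence (g_i)_{i∈ℕ₀} in G there exists a strictly increasing sequence of indices (n_i)_{i∈ℕ₀} such that the sequence of differences (g_{n_{i+1}} − g_{n_i})_{i∈ℕ₀} is strictly increasing. -/
/-!
If a strictly increasing sequence `g` were bounded above, its negatives would form a bounded-below
set containing an infinite descending chain, contradicting well-ordering. So `g` is unbounded,
and we can pick indices greedily: after `n i`, take `n (i + 1)` with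
`g (n (i + 1)) - g (n i) > g (n i) - g 0`, which dominates the previous difference since
`g 0 ≤ g (n (i - 1))`.
-/

theorem not_bddAbove_range_of_strictMono {G : Type*} [AddCommGroup G] [PartialOrder G]
    [IsOrderedAddMonoid G] (hwo : ∀ A : Set G, BddBelow A → A.IsWF) {g : ℕ → G}
    (hg : StrictMono g) : ¬BddAbove (Set.range g) := by
  rintro ⟨b, hb⟩
  have hbdd : BddBelow (Set.range (-g)) := by
    refine ⟨-b, ?_⟩
    rintro _ ⟨k, rfl⟩
    exact neg_le_neg (hb ⟨k, rfl⟩)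
  exact Set.isWF_iff_no_descending_seq.mp (hwo _ hbdd) (-g) hg.neg fun k => ⟨k, rfl⟩

theorem exists_strictMono_sub_strictMono_of_not_bddAbove {G : Type*} [AddCommGroup G]
    [LinearOrder G] [IsOrderedAddMonoid G] {g : ℕ → G} (hg : Monotone g)
    (hunb : ¬BddAbove (Set.range g)) :
    ∃ n : ℕ → ℕ, StrictMono n ∧ StrictMono (fun i => g (n (i + 1)) - g (n i)) := by
  have hnext : ∀ a, ∃ b, a < b ∧ g a - g 0 < g b - g a := by
    intro a
    obtain ⟨_, ⟨b, rfl⟩, hb⟩ := not_bddAbove_iff.mp hunb (g a + (g a - g 0))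
    have hab : a < b := lt_of_not_ge fun hba =>
      (hg hba).not_gt ((le_add_of_nonneg_right (sub_nonneg.mpr (hg a.zero_le))).trans_lt hb)
    exact ⟨b, hab, lt_sub_iff_add_lt'.mpr hb⟩
  choose next hlt hgrowth using hnext
  let n : ℕ → ℕ := fun i => Nat.rec 0 (fun _ a => next a) i
  refine ⟨n, strictMono_nat_of_lt_succ fun i => hlt (n i), strictMono_nat_of_lt_succ fun i => ?_⟩
  calc g (n (i + 1)) - g (n i) ≤ g (n (i + 1)) - g 0 := sub_le_sub_left (hg (n i).zero_le) _
    _ < g (n (i + 2)) - g (n (i + 1)) := hgrowth (n (i + 1))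

/-- In a linearly ordered abelian group in which every bounded-below subset is well-ordered,
every strictly increasing sequence admits a strictly increasing subsequence of indices along
which the consecutive differences are strictly increasing. -/
theorem exists_subsequence_strictMono_differences
    {G : Type*} [AddCommGroup G] [LinearOrder G] [IsOrderedAddMonoid G]
    (hwo : ∀ A : Set G, BddBelow A → A.IsWF)
    (g : ℕ → G) (hg : StrictMono g) :
    ∃ n : ℕ → ℕ, StrictMono n ∧ StrictMono (fun i : ℕ => g (n (i + 1)) - g (n i)) :=
  exists_strictMono_sub_strictMono_of_not_bddAbove hg.monotone
    (not_bddAbove_range_of_strictMono hwo hg)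
end
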